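/- Let 0 < h < 1, p ≥ 1, and let 0 < r_{j+1} ≤ r_j be real numbers. Set r_m = r_j·(r_{j+1}/r_j)^{1/(1+p)}. Then for all r, R with r_{j+1} ≤ r ≤ r_m ≤ R ≤ r_j, one has R^{h+(h−1)p} / (r · r_j^{(h−1)p} · r_{j+1}^{h−1}) ≤ R/r. -/

import Mathlib

/-!
With `r_m := r_j (r_{j+1}/r_j)^{1/(1+p)}` one has `r_m^{1+p} = r_j^p r_{j+1}`, so `R ≥ r_m` gives
`R^{1+p} ≥ r_j^p r_{j+1}`. Raising this to the nonpositive power `h - 1` reverses it, and since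
`R^{h+(h-1)p} = R · (R^{1+p})^{h-1}`, the numerator is at most `R · r_j^{(h-1)p} r_{j+1}^{h-1}`.
-/

open Real

noncomputable def transitionRadius (p a b : ℝ) : ℝ := a * (b / a) ^ (1 / (1 + p))

theorem transitionRadius_pos {p a b : ℝ} (ha : 0 < a) (hb : 0 < b) :
    0 < transitionRadius p a b := by
  unfold transitionRadius
  positivity

theorem transitionRadius_rpow_one_add {p a b : ℝ} (ha : 0 < a) (hb : 0 ≤ b) (hp : 1 + p ≠ 0) :
    transitionRadius p a b ^ (1 + p) = a ^ p * b := by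
  unfold transitionRadius
  rw [mul_rpow ha.le (by positivity), one_div, rpow_inv_rpow (by positivity) hp,
    rpow_add ha, rpow_one]
  field_simp

theorem rpow_le_mul_of_rpow_one_add_le {R a b h p : ℝ} (hR : 0 < R) (ha : 0 < a) (hb : 0 < b)
    (hh : h ≤ 1) (hab : a ^ p * b ≤ R ^ (1 + p)) :
    R ^ (h + (h - 1) * p) ≤ R * (a ^ ((h - 1) * p) * b ^ (h - 1)) := by
  have hsplit : R ^ (h + (h - 1) * p) = R * (R ^ (1 + p)) ^ (h - 1) := by
    rw [← rpow_mul hR.le, show h + (h - 1) * p = 1 + (1 + p) * (h - 1) by ring,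
      rpow_add hR, rpow_one]
  have hrhs : (a ^ p * b) ^ (h - 1) = a ^ ((h - 1) * p) * b ^ (h - 1) := by
    rw [mul_rpow (by positivity) hb.le, ← rpow_mul ha.le, mul_comm p]
  rw [hsplit, ← hrhs]
  exact mul_le_mul_of_nonneg_left (rpow_le_rpow_of_nonpos (by positivity) hab (by linarith)) hR.le

theorem measure_ratio_ineq_9_general (h p rj rj1 : ℝ) (hh1 : h < 1) (hp : 1 ≤ p)
    (h0 : 0 < rj1) (h1 : rj1 ≤ rj) (r R : ℝ) (hr1 : rj1 ≤ r)
    (hmR : rj * (rj1 / rj) ^ (1 / (1 + p)) ≤ R) :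
    R ^ (h + (h - 1) * p) / (r * rj ^ ((h - 1) * p) * rj1 ^ (h - 1)) ≤ R / r := by
  have hrj : 0 < rj := h0.trans_le h1
  have hr : 0 < r := h0.trans_le hr1
  have hp' : 0 < 1 + p := by linarith
  have hm : 0 < transitionRadius p rj rj1 := transitionRadius_pos hrj h0
  have hRpos : 0 < R := hm.trans_le hmR
  have hpow : rj ^ p * rj1 ≤ R ^ (1 + p) := by
    rw [← transitionRadius_rpow_one_add hrj h0.le hp'.ne']
    exact rpow_le_rpow hm.le hmR hp'.le
  have hnum := rpow_le_mul_of_rpow_one_add_le hRpos hrj h0 hh1.le hpow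
  have hD : 0 < rj ^ ((h - 1) * p) * rj1 ^ (h - 1) := by positivity
  calc R ^ (h + (h - 1) * p) / (r * rj ^ ((h - 1) * p) * rj1 ^ (h - 1))
      ≤ R * (rj ^ ((h - 1) * p) * rj1 ^ (h - 1)) / (r * rj ^ ((h - 1) * p) * rj1 ^ (h - 1)) :=
        div_le_div_of_nonneg_right hnum (by positivity)
    _ = R / r := by rw [mul_assoc r, mul_div_mul_right R r hD.ne']

/-- Algebraic inequality for the Assouad dimension of the conformal measure, case h < 1. -/
theorem measure_ratio_ineq_9 (h p rj rj1 : ℝ) (hh0 : 0 < h) (hh1 : h < 1) (hp : 1 ≤ p)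
    (h0 : 0 < rj1) (h1 : rj1 ≤ rj) (r R : ℝ) (hr1 : rj1 ≤ r)
    (hrm : r ≤ rj * (rj1 / rj) ^ (1 / (1 + p)))
    (hmR : rj * (rj1 / rj) ^ (1 / (1 + p)) ≤ R) (hR : R ≤ rj) :
    R ^ (h + (h - 1) * p) / (r * rj ^ ((h - 1) * p) * rj1 ^ (h - 1)) ≤ R / r :=
  measure_ratio_ineq_9_general h p rj rj1 hh1 hp h0 h1 r R hr1 hmR
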